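/- arXiv:2510.20978 — 6 statements merged into one kernel-verified Lean document; each statement's English description precedes it below -/
import Mathlib

section
/- Let g : [0,1] → ℝ be twice continuously differentiable with g'' > 0 on [0,1], and suppose |g'''(t)| ≤ 2θ·tan(2tθ)·g''(t) for all t ∈ [0,1], where 0 < θ < π/4. Then g(1) - g(0) - g'(0) ≤ (g''(0)/2)·θ⁻¹·∫₀¹ log(tan(θt + π/4)) dt. -/
open Real Set MeasureTheory

/-!
Write `L t = log (tan (θ t + π/4))`, so that `L' t = 2θ / cos (2θt)` and `L 0 = 0`. The bound on
`g'''` says exactly that `g''(t) cos (2θt)` is nonincreasing, hence `g'' ≤ g''(0) / cos (2θt)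
= (g''(0) / 2θ) L'`. Integrating once gives `g'(t) - g'(0) ≤ (g''(0) / 2θ) L t`, and integrating
again over `[0, 1]` gives the claim.
-/

theorem ContDiff.hasDerivAt_iteratedDeriv {𝕜 F : Type*} [NontriviallyNormedField 𝕜]
    [NormedAddCommGroup F] [NormedSpace 𝕜 F] {f : 𝕜 → F} {n : WithTop ℕ∞}
    (hf : ContDiff 𝕜 n f) {k : ℕ} (hk : k < n) (x : 𝕜) :
    HasDerivAt (iteratedDeriv k f) (iteratedDeriv (k + 1) f x) x := by
  rw [iteratedDeriv_succ]
  exact (hf.differentiable_iteratedDeriv k hk x).hasDerivAt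

theorem Real.hasDerivAt_log_tan {x : ℝ} (hsin : sin x ≠ 0) (hcos : cos x ≠ 0) :
    HasDerivAt (fun x => log (tan x)) (2 / sin (2 * x)) x := by
  have htan : tan x ≠ 0 := by rw [tan_eq_sin_div_cos]; exact div_ne_zero hsin hcos
  convert (hasDerivAt_tan hcos).log htan using 1
  rw [sin_two_mul, tan_eq_sin_div_cos]
  field_simp

theorem hasDerivAt_log_tan_mul_add_pi_div_four {θ t : ℝ} (h₀ : 0 < θ * t + π / 4)
    (h₁ : θ * t + π / 4 < π / 2) :
    HasDerivAt (fun s => log (tan (θ * s + π / 4))) (2 * θ / cos (2 * t * θ)) t := by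
  have hsin : sin (θ * t + π / 4) ≠ 0 := (sin_pos_of_pos_of_lt_pi h₀ (by linarith)).ne'
  have hcos : cos (θ * t + π / 4) ≠ 0 := (cos_pos_of_mem_Ioo ⟨by linarith, h₁⟩).ne'
  have hlin : HasDerivAt (fun s : ℝ => θ * s + π / 4) θ t := by
    simpa using ((hasDerivAt_id t).const_mul θ).add_const (π / 4)
  refine ((hasDerivAt_log_tan hsin hcos).comp t hlin).congr_deriv ?_
  rw [show 2 * (θ * t + π / 4) = 2 * t * θ + π / 2 by ring, sin_add_pi_div_two]
  ring

theorem antitoneOn_mul_cos_of_deriv_le {h h' : ℝ → ℝ} {θ : ℝ} {s : Set ℝ} (hs : Convex ℝ s)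
    (hh : ∀ x ∈ s, HasDerivAt h (h' x) x) (hcos : ∀ x ∈ interior s, 0 < cos (2 * x * θ))
    (hle : ∀ x ∈ interior s, h' x ≤ 2 * θ * tan (2 * x * θ) * h x) :
    AntitoneOn (fun x => h x * cos (2 * x * θ)) s := by
  have hderiv : ∀ x ∈ s, HasDerivAt (fun x => h x * cos (2 * x * θ))
      (h' x * cos (2 * x * θ) + h x * (-sin (2 * x * θ) * (2 * θ))) x := by
    intro x hx
    have hlin : HasDerivAt (fun y : ℝ => 2 * y * θ) (2 * θ) x := by
      simpa using ((hasDerivAt_id x).const_mul 2).mul_const θ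
    exact (hh x hx).mul ((hasDerivAt_cos _).comp x hlin)
  refine antitoneOn_of_hasDerivWithinAt_nonpos hs
    (fun x hx => (hderiv x hx).continuousAt.continuousWithinAt)
    (fun x hx => (hderiv x (interior_subset hx)).hasDerivWithinAt) fun x hx => ?_
  have hc := hcos x hx
  have key : h' x * cos (2 * x * θ) ≤ 2 * θ * sin (2 * x * θ) * h x :=
    calc h' x * cos (2 * x * θ)
        ≤ 2 * θ * tan (2 * x * θ) * h x * cos (2 * x * θ) :=
          mul_le_mul_of_nonneg_right (hle x hx) hc.le
      _ = 2 * θ * sin (2 * x * θ) * h x := by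
          rw [← tan_mul_cos hc.ne']; ring
  linarith

theorem sub_sub_mul_le_mul_integral_of_deriv_le {f f' f'' L L' : ℝ → ℝ} {a b K : ℝ}
    (hab : a ≤ b) (hf : ∀ x ∈ Icc a b, HasDerivAt f (f' x) x)
    (hf' : ∀ x ∈ Icc a b, HasDerivAt f' (f'' x) x) (hL : ∀ x ∈ Icc a b, HasDerivAt L (L' x) x)
    (hLa : L a = 0) (hle : ∀ x ∈ Ico a b, f'' x ≤ K * L' x) :
    f b - f a - (b - a) * f' a ≤ K * ∫ x in a..b, L x := by
  have hf'_le : ∀ x ∈ Icc a b, f' x ≤ f' a + K * L x :=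
    image_le_of_deriv_right_le_deriv_boundary
      (fun x hx => (hf' x hx).continuousAt.continuousWithinAt)
      (fun x hx => (hf' x (Ico_subset_Icc_self hx)).hasDerivWithinAt) (by simp [hLa])
      (fun x hx => ((hL x hx).const_mul K).continuousAt.continuousWithinAt.const_add _)
      (fun x hx => (((hL x (Ico_subset_Icc_self hx)).const_mul K).const_add _).hasDerivWithinAt)
      hle
  have hLint : IntegrableOn L (Icc a b) :=
    ContinuousOn.integrableOn_Icc fun x hx => (hL x hx).continuousAt.continuousWithinAt
  have hf_le := intervalIntegral.sub_le_integral_of_hasDeriv_right_of_le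
    (φ := fun x => f' a + K * L x) hab
    (fun x hx => (hf x hx).continuousAt.continuousWithinAt)
    (fun x hx => (hf x (Ioo_subset_Icc_self hx)).hasDerivWithinAt)
    ((integrableOn_const measure_Icc_lt_top.ne).add (hLint.const_mul K))
    (fun x hx => hf'_le x (Ioo_subset_Icc_self hx))
  rw [intervalIntegral.integral_add intervalIntegrable_const
    (((intervalIntegrable_iff_integrableOn_Icc_of_le hab).2 hLint).const_mul K),
    intervalIntegral.integral_const_mul, intervalIntegral.integral_const, smul_eq_mul] at hf_le
  linarith

theorem stmt_0_general (g : ℝ → ℝ) (θ : ℝ) (hθ0 : 0 < θ) (hθ : θ < π / 4)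
    (hg : ContDiff ℝ 3 g)
    (hsc : ∀ t ∈ Set.Icc (0:ℝ) 1,
      |iteratedDeriv 3 g t| ≤ 2 * θ * Real.tan (2 * t * θ) * iteratedDeriv 2 g t) :
    g 1 - g 0 - deriv g 0 ≤
      (iteratedDeriv 2 g 0 / 2) *
        (θ⁻¹ * ∫ t in (0:ℝ)..1, Real.log (Real.tan (θ * t + π / 4))) := by
  set L : ℝ → ℝ := fun t => log (tan (θ * t + π / 4))
  have hcos : ∀ t ∈ Icc (0:ℝ) 1, 0 < cos (2 * t * θ) := fun t ht =>
    cos_pos_of_mem_Ioo ⟨by nlinarith [ht.1], by nlinarith [ht.2]⟩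
  have hL : ∀ t ∈ Icc (0:ℝ) 1, HasDerivAt L (2 * θ / cos (2 * t * θ)) t := fun t ht =>
    hasDerivAt_log_tan_mul_add_pi_div_four (by nlinarith [ht.1]) (by nlinarith [ht.2])
  have hg2_cos : ∀ t ∈ Icc (0:ℝ) 1, iteratedDeriv 2 g t * cos (2 * t * θ) ≤ iteratedDeriv 2 g 0 :=
    fun t ht => by
      simpa using antitoneOn_mul_cos_of_deriv_le (convex_Icc 0 1)
        (fun x _ => hg.hasDerivAt_iteratedDeriv (k := 2) (by norm_num) x)
        (fun x hx => hcos x (interior_subset hx))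
        (fun x hx => (le_abs_self _).trans (hsc x (interior_subset hx)))
        (left_mem_Icc.2 zero_le_one) ht ht.1
  have key := sub_sub_mul_le_mul_integral_of_deriv_le (f'' := iteratedDeriv 2 g)
    (K := iteratedDeriv 2 g 0 / (2 * θ)) zero_le_one
    (fun x _ => (hg.differentiable (by norm_num) x).hasDerivAt)
    (fun x _ => by simpa only [iteratedDeriv_one] using
      hg.hasDerivAt_iteratedDeriv (k := 1) (by norm_num) x)
    hL (by simp [L, tan_pi_div_four]) fun x hx => ?_
  · convert key using 1 <;> ring
  · have hx := Ico_subset_Icc_self hx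
    rw [div_mul_div_comm, mul_comm (2 * θ) (cos _), mul_div_mul_right _ _ (by positivity),
      le_div_iff₀ (hcos x hx)]
    exact hg2_cos x hx

theorem stmt_0 (g : ℝ → ℝ) (θ : ℝ) (hθ0 : 0 < θ) (hθ : θ < π / 4)
    (hg : ContDiff ℝ 3 g)
    (hpos : ∀ t ∈ Set.Icc (0:ℝ) 1, 0 < iteratedDeriv 2 g t)
    (hsc : ∀ t ∈ Set.Icc (0:ℝ) 1,
      |iteratedDeriv 3 g t| ≤ 2 * θ * Real.tan (2 * t * θ) * iteratedDeriv 2 g t) :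
    g 1 - g 0 - deriv g 0 ≤
      (iteratedDeriv 2 g 0 / 2) *
        (θ⁻¹ * ∫ t in (0:ℝ)..1, Real.log (Real.tan (θ * t + π / 4))) :=
  stmt_0_general g θ hθ0 hθ hg hsc
end

section
/- Define ψ(θ) := θ⁻¹ ∫₀¹ log(tan(θt + π/4)) dt for θ ∈ (0, π/4). Then ψ(θ) → 1 as θ → 0⁺, and ψ(θ) ≤ 3/2 for all θ ∈ (0, π/4). -/
/-!
Put `g s = logTanShift s = log (tan (s + π / 4))`, so that `psi θ = θ⁻² ∫₀^θ g`,
`g 0 = 0` and `g' s = 2 / cos (2 s)`. On `[0, θ]` the derivative lies in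
`[2, 2 / cos (2 θ)]`, whence `1 ≤ psi θ ≤ 1 / cos (2 θ)` and the limit.

The derivative increases, so `g` is convex and `g x / x` increases; hence so does
`psi θ = ∫₀¹ t · g (θ t) / (θ t) dt`, and it suffices to bound `psi` for `θ ≥ 0.785`.
There `g (π / 4 - x) = log (cos x) - log (sin x)` is dominated by an explicit function
whose integral over `[0, π / 4]` is `≈ 0.9206 < (3 / 2) · 0.785²`. The margin is small:
the supremum of `psi` is `16 G / π² ≈ 1.485`, `G` being Catalan's constant.
-/

open Real

noncomputable def psi (θ : ℝ) : ℝ :=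
  θ⁻¹ * ∫ t in (0:ℝ)..1, Real.log (Real.tan (θ * t + π / 4))

open Set Filter Topology intervalIntegral

noncomputable def logTanShift (s : ℝ) : ℝ := log (tan (s + π / 4))

lemma logTanShift_zero : logTanShift 0 = 0 := by
  simp [logTanShift]

lemma Ico_subset_Ioo_neg_pi_div_four : Ico 0 (π / 4) ⊆ Ioo (-(π / 4)) (π / 4) :=
  Ico_subset_Ioo_left (by linarith [pi_pos])

lemma cos_two_mul_pos {s : ℝ} (hs : s ∈ Ioo (-(π / 4)) (π / 4)) : 0 < cos (2 * s) :=
  cos_pos_of_mem_Ioo ⟨by linarith [hs.1], by linarith [hs.2]⟩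

lemma hasDerivAt_logTanShift {s : ℝ} (hs : s ∈ Ioo (-(π / 4)) (π / 4)) :
    HasDerivAt logTanShift (2 / cos (2 * s)) s := by
  have hu : s + π / 4 ∈ Ioo 0 (π / 2) := ⟨by linarith [hs.1], by linarith [hs.2]⟩
  have hcos : 0 < cos (s + π / 4) := cos_pos_of_mem_Ioo ⟨by linarith [hu.1, pi_pos], hu.2⟩
  have hsin : 0 < sin (s + π / 4) := sin_pos_of_pos_of_lt_pi hu.1 (by linarith [hu.2, pi_pos])
  have htan : HasDerivAt (fun x => tan (x + π / 4)) (1 / cos (s + π / 4) ^ 2 * 1) s :=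
    (hasDerivAt_tan hcos.ne').comp (h := fun x => x + π / 4) s
      ((hasDerivAt_id' s).add_const (π / 4))
  have hdouble : cos (2 * s) = 2 * sin (s + π / 4) * cos (s + π / 4) := by
    rw [← sin_two_mul, show 2 * (s + π / 4) = 2 * s + π / 2 by ring, sin_add_pi_div_two]
  unfold logTanShift
  convert htan.log (tan_pos_of_pos_of_lt_pi_div_two hu.1 hu.2).ne' using 1
  rw [hdouble, tan_eq_sin_div_cos]
  field_simp

lemma continuousOn_logTanShift : ContinuousOn logTanShift (Ioo (-(π / 4)) (π / 4)) :=
  fun _ hs => (hasDerivAt_logTanShift hs).continuousAt.continuousWithinAt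

lemma intervalIntegrable_logTanShift {θ : ℝ} (hθ : θ ∈ Ico 0 (π / 4)) :
    IntervalIntegrable logTanShift MeasureTheory.volume 0 θ := by
  refine (continuousOn_logTanShift.mono fun x hx => ?_).intervalIntegrable
  rw [uIcc_of_le hθ.1] at hx
  exact Ico_subset_Ioo_neg_pi_div_four ⟨hx.1, hx.2.trans_lt hθ.2⟩

lemma two_mul_le_logTanShift {s : ℝ} (hs : s ∈ Ico 0 (π / 4)) : 2 * s ≤ logTanShift s := by
  have hsub := Ico_subset_Ioo_neg_pi_div_four
  have hmvt := (convex_Ico 0 (π / 4)).mul_sub_le_image_sub_of_le_deriv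
    (continuousOn_logTanShift.mono hsub)
    (fun x hx => (hasDerivAt_logTanShift
      (hsub (interior_subset hx))).differentiableAt.differentiableWithinAt)
    (C := 2) ?_ 0 ⟨le_rfl, by positivity⟩ s hs hs.1
  · simpa [logTanShift_zero] using hmvt
  · intro x hx
    have hx := hsub (interior_subset hx)
    rw [(hasDerivAt_logTanShift hx).deriv, le_div_iff₀ (cos_two_mul_pos hx)]
    linarith [cos_le_one (2 * x)]

lemma logTanShift_le {s θ : ℝ} (hs : s ∈ Icc 0 θ) (hθ : θ < π / 4) :
    logTanShift s ≤ 2 / cos (2 * θ) * s := by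
  have hsub : Icc 0 θ ⊆ Ioo (-(π / 4)) (π / 4) := fun x hx =>
    Ico_subset_Ioo_neg_pi_div_four ⟨hx.1, hx.2.trans_lt hθ⟩
  have hmvt := (convex_Icc 0 θ).image_sub_le_mul_sub_of_deriv_le
    (continuousOn_logTanShift.mono hsub)
    (fun x hx => (hasDerivAt_logTanShift
      (hsub (interior_subset hx))).differentiableAt.differentiableWithinAt)
    (C := 2 / cos (2 * θ)) ?_ 0 ⟨le_rfl, hs.1.trans hs.2⟩ s hs hs.1
  · simpa [logTanShift_zero] using hmvt
  · intro x hx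
    rw [interior_Icc] at hx
    rw [(hasDerivAt_logTanShift (hsub (Ioo_subset_Icc_self hx))).deriv]
    have hθ' : θ ∈ Ioo (-(π / 4)) (π / 4) := hsub ⟨hx.1.le.trans hx.2.le, le_rfl⟩
    have := cos_two_mul_pos hθ'
    gcongr 2 / ?_
    exact cos_le_cos_of_nonneg_of_le_pi (by linarith [hx.1]) (by linarith [hθ'.2, pi_pos])
      (by linarith [hx.2])

lemma convexOn_logTanShift : ConvexOn ℝ (Ico 0 (π / 4)) logTanShift := by
  have hsub := Ico_subset_Ioo_neg_pi_div_four
  refine MonotoneOn.convexOn_of_deriv (convex_Ico _ _)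
    (continuousOn_logTanShift.mono hsub) ?_ ?_ <;> rw [interior_Ico]
  · exact fun x hx => (hasDerivAt_logTanShift
      (hsub (Ioo_subset_Ico_self hx))).differentiableAt.differentiableWithinAt
  · intro a ha b hb hab
    rw [(hasDerivAt_logTanShift (hsub (Ioo_subset_Ico_self ha))).deriv,
      (hasDerivAt_logTanShift (hsub (Ioo_subset_Ico_self hb))).deriv]
    have := cos_two_mul_pos (hsub (Ioo_subset_Ico_self hb))
    gcongr 2 / ?_
    exact cos_le_cos_of_nonneg_of_le_pi (by linarith [ha.1]) (by linarith [hb.2, pi_pos])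
      (by linarith)

lemma monotoneOn_logTanShift_div :
    MonotoneOn (fun x => logTanShift x / x) (Ioo 0 (π / 4)) := by
  intro a ha b hb hab
  have hsec := convexOn_logTanShift.secant_mono (a := 0) ⟨le_rfl, by positivity⟩
    (Ioo_subset_Ico_self ha) (Ioo_subset_Ico_self hb) ha.1.ne' hb.1.ne' hab
  simpa [logTanShift_zero] using hsec

lemma psi_eq_integral_div_sq {θ : ℝ} (hθ : θ ≠ 0) :
    psi θ = (∫ s in (0:ℝ)..θ, logTanShift s) / θ ^ 2 := by
  have hcomp := integral_comp_mul_left logTanShift hθ (a := 0) (b := 1)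
  rw [mul_zero, mul_one] at hcomp
  rw [psi, show (∫ t in (0:ℝ)..1, log (tan (θ * t + π / 4)))
    = ∫ t in (0:ℝ)..1, logTanShift (θ * t) from rfl, hcomp, smul_eq_mul]
  field_simp

lemma one_le_psi {θ : ℝ} (hθ : θ ∈ Ioo 0 (π / 4)) : 1 ≤ psi θ := by
  rw [psi_eq_integral_div_sq hθ.1.ne', le_div_iff₀ (by positivity [hθ.1]), one_mul]
  calc θ ^ 2 = ∫ s in (0:ℝ)..θ, 2 * s := by rw [integral_const_mul, integral_id]; ring
    _ ≤ ∫ s in (0:ℝ)..θ, logTanShift s :=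
      integral_mono_on hθ.1.le (Continuous.intervalIntegrable (by fun_prop) _ _)
        (intervalIntegrable_logTanShift (Ioo_subset_Ico_self hθ))
        fun s hs => two_mul_le_logTanShift ⟨hs.1, hs.2.trans_lt hθ.2⟩

lemma psi_le_inv_cos {θ : ℝ} (hθ : θ ∈ Ioo 0 (π / 4)) : psi θ ≤ (cos (2 * θ))⁻¹ := by
  rw [psi_eq_integral_div_sq hθ.1.ne', div_le_iff₀ (by positivity [hθ.1])]
  calc ∫ s in (0:ℝ)..θ, logTanShift s ≤ ∫ s in (0:ℝ)..θ, 2 / cos (2 * θ) * s :=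
      integral_mono_on hθ.1.le (intervalIntegrable_logTanShift (Ioo_subset_Ico_self hθ))
        (Continuous.intervalIntegrable (by fun_prop) _ _) fun s hs => logTanShift_le hs hθ.2
    _ = (cos (2 * θ))⁻¹ * θ ^ 2 := by rw [integral_const_mul, integral_id]; ring

lemma tendsto_psi_nhdsGT_zero : Tendsto psi (𝓝[>] 0) (𝓝 1) := by
  have hsec : Tendsto (fun θ => (cos (2 * θ))⁻¹) (𝓝[>] 0) (𝓝 1) := by
    have : ContinuousAt (fun θ => (cos (2 * θ))⁻¹) 0 := by fun_prop (disch := simp)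
    simpa using this.tendsto.mono_left nhdsWithin_le_nhds
  have hmem : Ioo 0 (π / 4) ∈ 𝓝[>] (0:ℝ) := Ioo_mem_nhdsGT (by positivity)
  exact tendsto_of_tendsto_of_tendsto_of_le_of_le' tendsto_const_nhds hsec
    (eventually_of_mem hmem fun _ => one_le_psi) (eventually_of_mem hmem fun _ => psi_le_inv_cos)

lemma monotoneOn_psi : MonotoneOn psi (Ioo 0 (π / 4)) := by
  intro θ hθ₀ θ' hθ₀' hθθ'
  have hint {φ : ℝ} (hφ : φ ∈ Ioo 0 (π / 4)) :
      IntervalIntegrable (fun t => φ⁻¹ * logTanShift (φ * t)) MeasureTheory.volume 0 1 := by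
    refine ContinuousOn.intervalIntegrable (continuousOn_const.mul ?_)
    refine continuousOn_logTanShift.comp (by fun_prop) fun t ht => ?_
    rw [uIcc_of_le zero_le_one] at ht
    exact Ico_subset_Ioo_neg_pi_div_four
      ⟨by nlinarith [ht.1, hφ.1], by nlinarith [ht.2, hφ.1, hφ.2]⟩
  rw [psi, psi, ← integral_const_mul, ← integral_const_mul]
  refine integral_mono_on zero_le_one (hint hθ₀) (hint hθ₀') fun t ht => ?_
  rcases ht.1.eq_or_lt with rfl | ht0
  · simp
  calc θ⁻¹ * logTanShift (θ * t) = t * (logTanShift (θ * t) / (θ * t)) := by field_simp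
    _ ≤ t * (logTanShift (θ' * t) / (θ' * t)) :=
      mul_le_mul_of_nonneg_left (monotoneOn_logTanShift_div
        ⟨mul_pos hθ₀.1 ht0, by nlinarith [ht.2, hθ₀.1, hθ₀.2]⟩
        ⟨mul_pos hθ₀'.1 ht0, by nlinarith [ht.2, hθ₀'.1, hθ₀'.2]⟩ (by gcongr)) ht0.le
    _ = θ'⁻¹ * logTanShift (θ' * t) := by field_simp

lemma log_le_sub_one_sub_sq_div_two {x : ℝ} (h0 : 0 < x) (h1 : x ≤ 1) :
    log x ≤ (x - 1) - (x - 1) ^ 2 / 2 := by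
  have hseries := hasSum_pow_div_log_of_abs_lt_one (x := 1 - x)
    (by rw [abs_lt]; constructor <;> linarith)
  have hpartial := sum_le_hasSum (Finset.range 2)
    (fun n _ => div_nonneg (pow_nonneg (sub_nonneg.2 h1) _) (by positivity)) hseries
  norm_num [Finset.sum_range_succ] at hpartial
  nlinarith

lemma neg_log_sin_le {x : ℝ} (h0 : 0 < x) (h1 : x ^ 2 ≤ 3 / 4) :
    -log (sin x) ≤ -log x + 4 / 21 * x ^ 2 := by
  have hu : 0 < 1 - x ^ 2 / 6 := by linarith
  have hsin : x * (1 - x ^ 2 / 6) ≤ sin x := by nlinarith [sin_ge_sub_cube h0.le]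
  have hlog : log x + log (1 - x ^ 2 / 6) ≤ log (sin x) := by
    rw [← log_mul h0.ne' hu.ne']
    exact log_le_log (by positivity) hsin
  have hinv : (1 - x ^ 2 / 6)⁻¹ ≤ 1 + 4 / 21 * x ^ 2 := by
    rw [inv_le_iff_one_le_mul₀ hu]; nlinarith [sq_nonneg x]
  linarith [one_sub_inv_le_log_of_pos hu]

/-- The first three terms expand `(c - 1) - (c - 1) ^ 2 / 2 ≥ log c` at `c = cos x`. -/
noncomputable def negLogTanMajorant (x : ℝ) : ℝ :=
  2 * cos x - cos x ^ 2 / 2 - 3 / 2 - log x + 4 / 21 * x ^ 2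

lemma neg_log_tan_le_negLogTanMajorant {x : ℝ} (h0 : 0 < x) (h1 : x ≤ π / 4) :
    -log (tan x) ≤ negLogTanMajorant x := by
  have hcos : 0 < cos x := cos_pos_of_mem_Ioo ⟨by linarith [pi_pos], by linarith [pi_pos]⟩
  have hsin : 0 < sin x := sin_pos_of_pos_of_lt_pi h0 (by linarith [pi_pos])
  have hlogcos := log_le_sub_one_sub_sq_div_two hcos (cos_le_one x)
  have hlogsin := neg_log_sin_le h0 (by nlinarith [pi_lt_d2])
  rw [tan_eq_sin_div_cos, log_div hsin.ne' hcos.ne', negLogTanMajorant]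
  nlinarith

lemma intervalIntegrable_negLogTanMajorant (a b : ℝ) :
    IntervalIntegrable negLogTanMajorant MeasureTheory.volume a b :=
  ((Continuous.intervalIntegrable (by fun_prop) a b).sub intervalIntegrable_log').add
    (Continuous.intervalIntegrable (by fun_prop) a b)

lemma integral_negLogTanMajorant :
    ∫ x in (0:ℝ)..π / 4, negLogTanMajorant x
      = √2 - 7 * π / 16 - 1 / 8 + π / 4 * (1 - log (π / 4)) + 4 / 63 * (π / 4) ^ 3 := by
  simp only [negLogTanMajorant]
  rw [integral_add, integral_sub, integral_sub, integral_sub, integral_const_mul, integral_div,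
    integral_const_mul, integral_cos, integral_cos_sq, integral_log, integral_pow, integral_const]
  · simp only [cos_pi_div_four, sin_pi_div_four, cos_zero, sin_zero, log_zero]
    linear_combination (-1 / 16 : ℝ) * sq_sqrt (show (0:ℝ) ≤ 2 by norm_num)
  all_goals first
    | exact intervalIntegrable_log'
    | exact (Continuous.intervalIntegrable (by fun_prop) _ _).sub intervalIntegrable_log'
    | exact Continuous.intervalIntegrable (by fun_prop) _ _

lemma logTanShift_eq_neg_log_tan (s : ℝ) : logTanShift s = -log (tan (π / 4 - s)) := by
  rw [logTanShift, show s + π / 4 = π / 2 - (π / 4 - s) by ring, tan_pi_div_two_sub, log_inv]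

lemma integral_logTanShift_le_integral_negLogTanMajorant {θ : ℝ} (hθ : θ ∈ Ico 0 (π / 4)) :
    ∫ s in (0:ℝ)..θ, logTanShift s ≤ ∫ x in (0:ℝ)..π / 4, negLogTanMajorant x := by
  have hpointwise : ∀ s ∈ Icc 0 θ, logTanShift s ≤ negLogTanMajorant (π / 4 - s) :=
    fun s hs => by
      rw [logTanShift_eq_neg_log_tan]
      exact neg_log_tan_le_negLogTanMajorant (by linarith [hs.2, hθ.2]) (by linarith [hs.1])
  have hnonneg : ∀ x ∈ Ioc 0 (π / 4), 0 ≤ negLogTanMajorant x := fun x hx => by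
    have hg := two_mul_le_logTanShift (s := π / 4 - x) ⟨by linarith [hx.2], by linarith [hx.1]⟩
    rw [logTanShift_eq_neg_log_tan, sub_sub_cancel] at hg
    linarith [neg_log_tan_le_negLogTanMajorant hx.1 hx.2, hx.2]
  have hreflected : IntervalIntegrable (fun s => negLogTanMajorant (π / 4 - s))
      MeasureTheory.volume 0 θ := by
    simpa using (intervalIntegrable_negLogTanMajorant (π / 4) (π / 4 - θ)).comp_sub_left (π / 4)
  calc ∫ s in (0:ℝ)..θ, logTanShift s ≤ ∫ s in (0:ℝ)..θ, negLogTanMajorant (π / 4 - s) :=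
        integral_mono_on hθ.1 (intervalIntegrable_logTanShift hθ) hreflected hpointwise
    _ = ∫ x in (π / 4 - θ)..π / 4, negLogTanMajorant x := by
        simp [integral_comp_sub_left negLogTanMajorant (π / 4)]
    _ ≤ ∫ x in (0:ℝ)..π / 4, negLogTanMajorant x :=
        integral_mono_interval (by linarith [hθ.2]) (by linarith [hθ.1]) le_rfl
          ((MeasureTheory.ae_restrict_mem measurableSet_Ioc).mono hnonneg)
          (intervalIntegrable_negLogTanMajorant _ _)

lemma log_pi_div_four_gt : -0.244 < log (π / 4) := by
  have h4π : 4 / π < exp 0.244 := by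
    calc 4 / π < 4 / 3.141592 := by gcongr; exact pi_gt_d6
      _ < 1 + 0.244 + 0.244 ^ 2 / 2 := by norm_num
      _ ≤ exp 0.244 := quadratic_le_exp_of_nonneg (by norm_num)
  rw [← neg_lt_neg_iff, neg_neg, ← log_inv, inv_div, log_lt_iff_lt_exp (by positivity)]
  exact h4π

lemma integral_negLogTanMajorant_lt :
    ∫ x in (0:ℝ)..π / 4, negLogTanMajorant x < 3 / 2 * 0.785 ^ 2 := by
  rw [integral_negLogTanMajorant]
  have hsqrt : √2 < 1.41422 := by rw [sqrt_lt' (by norm_num)]; norm_num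
  have hπ := pi_gt_d6
  have hπ' := pi_lt_d6
  have hlog : π / 4 * (1 - log (π / 4)) < π / 4 * 1.244 := by
    gcongr; linarith [log_pi_div_four_gt]
  have hcube : (π / 4) ^ 3 < 0.7854 ^ 3 := by gcongr; linarith
  linarith

lemma psi_le_three_halves {θ : ℝ} (hθ : θ ∈ Ioo 0 (π / 4)) : psi θ ≤ 3 / 2 := by
  set θ₁ := max θ 0.785
  have hθ₁ : θ₁ < π / 4 := max_lt hθ.2 (by linarith [pi_gt_d2])
  have hθ₁pos : 0 < θ₁ := hθ.1.trans_le (le_max_left _ _)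
  calc psi θ ≤ psi θ₁ := monotoneOn_psi hθ ⟨hθ₁pos, hθ₁⟩ (le_max_left _ _)
    _ = (∫ s in (0:ℝ)..θ₁, logTanShift s) / θ₁ ^ 2 := psi_eq_integral_div_sq hθ₁pos.ne'
    _ ≤ 3 / 2 := by
      rw [div_le_iff₀ (by positivity)]
      have hint := integral_logTanShift_le_integral_negLogTanMajorant ⟨hθ₁pos.le, hθ₁⟩
      have hsq : (0.785 : ℝ) ^ 2 ≤ θ₁ ^ 2 := by gcongr; exact le_max_right _ _
      linarith [integral_negLogTanMajorant_lt]

theorem stmt_2 :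
    Filter.Tendsto psi (nhdsWithin 0 (Set.Ioi 0)) (nhds 1) ∧
      ∀ θ ∈ Set.Ioo (0:ℝ) (π / 4), psi θ ≤ 3 / 2 :=
  ⟨tendsto_psi_nhdsGT_zero, fun _ => psi_le_three_halves⟩
end

section
/- Let Σ be a d×d symmetric matrix with orthonormal eigenvectors u₁,...,u_d and eigenvalues λ₁ ≥ ... ≥ λ_d. Let U ∈ ℝ^{d×k} have columns u₁,...,u_k and U⊥ ∈ ℝ^{d×(d-k)} have columns u_{k+1},...,u_d. Let E_{ij} ∈ ℝ^{(d-k)×k} be the matrix with a 1 in position (i,j) and zeros elsewhere, and Δ_{ij} := U⊥·E_{ij}. Then Δ_{ij}·UᵀΣU - (I_d - UUᵀ)·Σ·Δ_{ij} = (λ_j - λ_{k+i})·Δ_{ij}. -/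
/-!
Orthonormality gives `Uᵀ U = 1` and `Uᵀ U⊥ = 0`, and the eigen-equations read `S U = U Λ₁`,
`S U⊥ = U⊥ Λ₂` with diagonal `Λ₁`, `Λ₂`. Hence `Uᵀ S U = Λ₁` and `(1 - U Uᵀ) S U⊥ = U⊥ Λ₂`,
and a matrix unit `E_ij` times a diagonal matrix on the right (left) is `E_ij` scaled by the `j`-th
(`i`-th) diagonal entry.
-/

open Matrix

namespace Matrix

variable {R : Type*} [CommSemiring R]

section Columns

variable {n ι κ κ' : Type*} [Fintype n]

theorem transpose_mul_eq_of_orthonormal_columns [DecidableEq ι] (u : ι → n → R)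
    (horth : ∀ a b, u a ⬝ᵥ u b = if a = b then 1 else 0) (f : κ → ι) (g : κ' → ι) :
    (of fun a b => u (f b) a)ᵀ * (of fun a b => u (g b) a) =
      of fun p q => if f p = g q then 1 else 0 := by
  ext p q
  simpa [mul_apply, dotProduct] using horth (f p) (g q)

theorem transpose_mul_self_eq_one_of_orthonormal_columns [DecidableEq ι] [DecidableEq κ]
    (u : ι → n → R)
    (horth : ∀ a b, u a ⬝ᵥ u b = if a = b then 1 else 0) {f : κ → ι} (hf : f.Injective) :
    (of fun a b => u (f b) a)ᵀ * (of fun a b => u (f b) a) = 1 := by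
  rw [transpose_mul_eq_of_orthonormal_columns u horth]
  ext p q
  simp [one_apply, hf.eq_iff]

theorem transpose_mul_eq_zero_of_orthonormal_columns [DecidableEq ι] (u : ι → n → R)
    (horth : ∀ a b, u a ⬝ᵥ u b = if a = b then 1 else 0) {f : κ → ι} {g : κ' → ι}
    (hfg : ∀ p q, f p ≠ g q) :
    (of fun a b => u (f b) a)ᵀ * (of fun a b => u (g b) a) = 0 := by
  rw [transpose_mul_eq_of_orthonormal_columns u horth]
  ext p q
  simp [hfg p q]

theorem mul_eq_mul_diagonal_of_eigenvector_columns [Fintype κ] [DecidableEq κ]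
    (S : Matrix n n R) (u : ι → n → R) (lam : ι → R)
    (heig : ∀ m, S *ᵥ u m = lam m • u m) (f : κ → ι) :
    S * (of fun a b => u (f b) a) = (of fun a b => u (f b) a) * diagonal (lam ∘ f) := by
  ext a p
  rw [mul_diagonal, mul_comm]
  simpa [mul_apply, mulVec, dotProduct] using congrFun (heig (f p)) a

end Columns

variable {m n : Type*} [DecidableEq m] [DecidableEq n]

theorem single_mul_diagonal_eq_smul [Fintype n] (i : m) (j : n) (c : R) (v : n → R) :
    single i j c * diagonal v = v j • single i j c := by
  ext a b
  by_cases hb : j = b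
  · subst hb
    simp [single_apply, mul_comm]
  · simp [hb]

theorem diagonal_mul_single_eq_smul [Fintype m] (i : m) (j : n) (c : R) (v : m → R) :
    diagonal v * single i j c = v i • single i j c := by
  ext a b
  by_cases ha : i = a
  · subst ha
    simp [single_apply]
  · simp [ha]

end Matrix

theorem stmt_6 (d k : ℕ) (hk : k ≤ d) (S : Matrix (Fin d) (Fin d) ℝ)
    (u : Fin d → Fin d → ℝ) (lam : Fin d → ℝ)
    (horth : ∀ a b, u a ⬝ᵥ u b = if a = b then (1:ℝ) else 0)
    (heig : ∀ m, S.mulVec (u m) = lam m • u m)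
    (i : Fin (d - k)) (j : Fin k)
    (U : Matrix (Fin d) (Fin k) ℝ) (hU : U = Matrix.of fun a b => u (Fin.castLE hk b) a)
    (Uperp : Matrix (Fin d) (Fin (d - k)) ℝ)
    (hUperp : Uperp = Matrix.of fun a (b : Fin (d - k)) => u ⟨k + b.1, by omega⟩ a) :
    (Uperp * Matrix.single i j (1:ℝ)) * (Uᵀ * S * U) -
        (1 - U * Uᵀ) * S * (Uperp * Matrix.single i j (1:ℝ)) =
      (lam (Fin.castLE hk j) - lam ⟨k + i.1, by omega⟩) •
        (Uperp * Matrix.single i j (1:ℝ)) := by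
  set bot : Fin (d - k) → Fin d := fun b => ⟨k + b.1, by omega⟩
  have hUtU : Uᵀ * U = 1 := by
    rw [hU]
    exact transpose_mul_self_eq_one_of_orthonormal_columns u horth (Fin.castLE_injective hk)
  have hUtUperp : Uᵀ * Uperp = 0 := by
    rw [hU, hUperp]
    refine transpose_mul_eq_zero_of_orthonormal_columns u horth fun p q => ?_
    simp only [ne_eq, Fin.ext_iff, Fin.val_castLE]
    omega
  have hSU : S * U = U * diagonal (lam ∘ Fin.castLE hk) := by
    rw [hU]; exact mul_eq_mul_diagonal_of_eigenvector_columns S u lam heig _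
  have hSUperp : S * Uperp = Uperp * diagonal (lam ∘ bot) := by
    rw [hUperp]; exact mul_eq_mul_diagonal_of_eigenvector_columns S u lam heig bot
  have hcompress : Uᵀ * S * U = diagonal (lam ∘ Fin.castLE hk) := by
    rw [Matrix.mul_assoc, hSU, ← Matrix.mul_assoc, hUtU, Matrix.one_mul]
  have hproject : (1 - U * Uᵀ) * S * Uperp = Uperp * diagonal (lam ∘ bot) := by
    rw [Matrix.sub_mul, Matrix.sub_mul, Matrix.one_mul, Matrix.mul_assoc (U * Uᵀ), hSUperp,
      Matrix.mul_assoc U, ← Matrix.mul_assoc Uᵀ, hUtUperp, Matrix.zero_mul, Matrix.mul_zero,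
      sub_zero]
  rw [hcompress, ← Matrix.mul_assoc, hproject, Matrix.mul_assoc, Matrix.mul_assoc,
    single_mul_diagonal_eq_smul, diagonal_mul_single_eq_smul, Matrix.mul_smul, Matrix.mul_smul,
    ← sub_smul]
  rfl
end

section
/- Let Σ have eigenvalues λ₁ ≥ ... ≥ λ_d with λ_k > λ_{k+1}. Then every eigenvalue of the linear map Δ ↦ Δ·UᵀΣU - (I - UUᵀ)·Σ·Δ on the horizontal space {Δ ∈ ℝ^{d×k} : UᵀΔ = 0} is at least λ_k - λ_{k+1} > 0; in particular the map is positive definite with respect to the Frobenius inner product. -/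
/-!
Write `Δ = Pᵀ C` in the orthonormal eigenbasis `P` of `Σ`, so that `Σ = Pᵀ diag(λ) P` and
`U` consists of the first `k` columns of `Pᵀ`. Then `UᵀΔ = 0` says that the first `k` rows of `C`
vanish, and the quadratic form of the Hessian becomes `∑ (λ_j - λ_i) C_ij²` over `j ≤ k < i`,
while `tr(ΔᵀΔ) = ∑ C_ij²`. Every coefficient `λ_j - λ_i` there is at least `λ_k - λ_{k+1}`.
-/

open Matrix

variable {m n R : Type*} [Fintype m] [Fintype n] [CommRing R]

theorem Matrix.trace_transpose_mul_self (A : Matrix n m R) :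
    (Aᵀ * A).trace = ∑ j, ∑ i, A i j ^ 2 := by
  simp [trace, mul_apply, sq]

theorem Matrix.trace_transpose_mul_self_pos {A : Matrix n m ℝ} (hA : A ≠ 0) :
    0 < (Aᵀ * A).trace := by
  refine lt_of_le_of_ne (by rw [trace_transpose_mul_self]; positivity) (Ne.symm ?_)
  rwa [← conjTranspose_eq_transpose_of_trivial, Ne, trace_conjTranspose_mul_self_eq_zero_iff]

theorem Matrix.trace_transpose_mul_mul_diagonal_sub_diagonal_mul [DecidableEq m] [DecidableEq n]
    (C : Matrix n m R) (μ : m → R) (ν : n → R) :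
    (Cᵀ * (C * diagonal μ - diagonal ν * C)).trace = ∑ j, ∑ i, (μ j - ν i) * C i j ^ 2 := by
  simp only [trace, diag_apply, mul_sub, sub_apply, mul_apply, transpose_apply, diagonal_apply,
    mul_ite, ite_mul, mul_zero, zero_mul, Finset.sum_ite_eq, Finset.sum_ite_eq', Finset.mem_univ,
    if_true]
  exact Finset.sum_congr rfl fun _ _ => Finset.sum_congr rfl fun _ _ => by ring

omit [Fintype m] in
theorem Matrix.transpose_submatrix_id_mul (M : Matrix n n R) (N : Matrix n m R) (f : m → n) :
    (M.submatrix id f)ᵀ * N = (Mᵀ * N).submatrix f id := by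
  rw [submatrix_mul _ _ f id id Function.bijective_id, submatrix_id_id, transpose_submatrix]

omit [Fintype m] in
theorem Matrix.transpose_mul_self_mul_left [DecidableEq n] {P : Matrix n n R} (hP : Pᵀ * P = 1)
    (A : Matrix n m R) :
    (P * A)ᵀ * (P * A) = Aᵀ * A := by
  rw [transpose_mul, Matrix.mul_assoc, ← Matrix.mul_assoc Pᵀ, hP, Matrix.one_mul]

def grassmannHessian [DecidableEq n] (S : Matrix n n R) (U Δ : Matrix n m R) : Matrix n m R :=
  Δ * (Uᵀ * S * U) - (1 - U * Uᵀ) * S * Δ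

section Eigenbasis

variable [DecidableEq m] [DecidableEq n] {f : m → n}

theorem trace_transpose_mul_grassmannHessian {S P : Matrix n n R} {lam : n → R}
    {Δ : Matrix n m R} (hP : P * Pᵀ = 1)
    (hSP : S * Pᵀ = Pᵀ * diagonal lam) (hf : f.Injective)
    (hΔ : (Pᵀ.submatrix id f)ᵀ * Δ = 0) :
    (Δᵀ * grassmannHessian S (Pᵀ.submatrix id f) Δ).trace =
      ∑ j, ∑ i, (lam (f j) - lam i) * (P * Δ) i j ^ 2 := by
  set U := Pᵀ.submatrix id f
  set C := P * Δ
  have hΔC : Δ = Pᵀ * C := by rw [← Matrix.mul_assoc, mul_eq_one_comm.mp hP, Matrix.one_mul]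
  have hPSP : P * S * Pᵀ = diagonal lam := by
    rw [Matrix.mul_assoc, hSP, ← Matrix.mul_assoc, hP, Matrix.one_mul]
  have hUSU : Uᵀ * S * U = diagonal (lam ∘ f) := by
    rw [← submatrix_diagonal _ _ hf, ← hPSP, submatrix_mul _ _ f id f Function.bijective_id,
      submatrix_mul _ _ f id id Function.bijective_id, submatrix_id_id, transpose_submatrix,
      transpose_transpose]
  have hΔU : Δᵀ * U = 0 := by rw [← transpose_transpose U, ← transpose_mul, hΔ, transpose_zero]
  have hΔproj : Δᵀ * (1 - U * Uᵀ) = Δᵀ := by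
    rw [Matrix.mul_sub, Matrix.mul_one, ← Matrix.mul_assoc, hΔU, Matrix.zero_mul, sub_zero]
  have hΔΔ : Δᵀ * Δ = Cᵀ * C := (transpose_mul_self_mul_left (mul_eq_one_comm.mp hP) Δ).symm
  have hΔSΔ : Δᵀ * ((1 - U * Uᵀ) * S * Δ) = Cᵀ * (diagonal lam * C) := by
    rw [Matrix.mul_assoc _ S, ← Matrix.mul_assoc Δᵀ, hΔproj, hΔC, transpose_mul,
      transpose_transpose, ← hPSP]
    simp only [Matrix.mul_assoc]
  have hΔH : Δᵀ * grassmannHessian S U Δ = Cᵀ * (C * diagonal (lam ∘ f) - diagonal lam * C) := by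
    rw [grassmannHessian, hUSU, Matrix.mul_sub, ← Matrix.mul_assoc, hΔΔ, hΔSΔ, Matrix.mul_sub,
      Matrix.mul_assoc]
  rw [hΔH, trace_transpose_mul_mul_diagonal_sub_diagonal_mul]
  rfl

theorem gap_mul_trace_le_trace_grassmannHessian {S P : Matrix n n ℝ} {lam : n → ℝ}
    {Δ : Matrix n m ℝ} (hP : P * Pᵀ = 1) (hSP : S * Pᵀ = Pᵀ * diagonal lam) (hf : f.Injective)
    (hΔ : (Pᵀ.submatrix id f)ᵀ * Δ = 0) {g : ℝ}
    (hgap : ∀ j i, i ∉ Set.range f → g ≤ lam (f j) - lam i) :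
    g * (Δᵀ * Δ).trace ≤ (Δᵀ * grassmannHessian S (Pᵀ.submatrix id f) Δ).trace := by
  have hC : ∀ j j', (P * Δ) (f j') j = 0 := fun j j' => by
    rw [transpose_submatrix_id_mul, transpose_transpose] at hΔ
    exact congrFun (congrFun hΔ j') j
  rw [trace_transpose_mul_grassmannHessian hP hSP hf hΔ,
    ← transpose_mul_self_mul_left (mul_eq_one_comm.mp hP), trace_transpose_mul_self]
  simp only [Finset.mul_sum]
  refine Finset.sum_le_sum fun j _ => Finset.sum_le_sum fun i _ => ?_
  by_cases hi : i ∈ Set.range f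
  · obtain ⟨j', rfl⟩ := hi
    simp [hC]
  · exact mul_le_mul_of_nonneg_right (hgap j i hi) (sq_nonneg _)

end Eigenbasis

theorem stmt_7 (d k : ℕ) (hk : k < d)
    (S : Matrix (Fin d) (Fin d) ℝ)
    (u : Fin d → Fin d → ℝ) (lam : Fin d → ℝ) (hmono : Antitone lam)
    (horth : ∀ a b, u a ⬝ᵥ u b = if a = b then (1:ℝ) else 0)
    (heig : ∀ m, S.mulVec (u m) = lam m • u m)
    (hgap : lam ⟨k, hk⟩ < lam ⟨k - 1, by omega⟩)
    (U : Matrix (Fin d) (Fin k) ℝ)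
    (hU : U = Matrix.of fun a b => u (Fin.castLE hk.le b) a)
    (Δ : Matrix (Fin d) (Fin k) ℝ) (hΔ : Uᵀ * Δ = 0) :
    (lam ⟨k - 1, by omega⟩ - lam ⟨k, hk⟩) * (Δᵀ * Δ).trace ≤
        (Δᵀ * (Δ * (Uᵀ * S * U) - (1 - U * Uᵀ) * S * Δ)).trace ∧
      (Δ ≠ 0 → 0 < (Δᵀ * (Δ * (Uᵀ * S * U) - (1 - U * Uᵀ) * S * Δ)).trace) := by
  set P : Matrix (Fin d) (Fin d) ℝ := of u
  have hP : P * Pᵀ = 1 := by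
    ext a b
    simpa [P, mul_apply, one_apply, dotProduct] using horth a b
  have hSP : S * Pᵀ = Pᵀ * diagonal lam := by
    ext a i
    rw [mul_diagonal]
    simpa [P, mul_apply, mulVec, dotProduct, mul_comm] using congrFun (heig i) a
  have hcoeff : ∀ j i, i ∉ Set.range (Fin.castLE hk.le) →
      lam ⟨k - 1, by omega⟩ - lam ⟨k, hk⟩ ≤ lam (Fin.castLE hk.le j) - lam i := by
    intro j i hi
    have hki : k ≤ i := by
      by_contra! h
      exact hi ⟨⟨i, h⟩, rfl⟩
    have hlj : lam ⟨k - 1, by omega⟩ ≤ lam (Fin.castLE hk.le j) :=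
      hmono (Fin.le_def.2 (show (j : ℕ) ≤ k - 1 by omega))
    have hli : lam i ≤ lam ⟨k, hk⟩ := hmono hki
    linarith
  subst hU
  have hbound :=
    gap_mul_trace_le_trace_grassmannHessian hP hSP (Fin.castLE_injective hk.le) hΔ hcoeff
  exact ⟨hbound, fun hne =>
    (mul_pos (sub_pos.2 hgap) (trace_transpose_mul_self_pos hne)).trans_le hbound⟩
end

section
/- Let S be a k×k diagonal matrix with diagonal entries s_j ∈ [0, π/4), t ∈ [0,1], and let B be a k×k symmetric positive semidefinite matrix. Then |tr(S³·sin(2tS)·B)| ≤ ‖S·tan(2tS)‖_op · tr(S²·cos(2tS)·B). -/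
/-!
Because `S` is diagonal, both traces only see the diagonal of `B`, whose entries are nonnegative
for positive semidefinite `B`. The Hölder bound therefore collapses to the termwise identity
`s³ sin(2ts) = (s tan(2ts)) · (s² cos(2ts))`, in which both factors are nonnegative since
`0 ≤ 2ts < π/2`, and the first is at most its maximum over `j`.
-/

open Matrix Real

lemma Matrix.trace_diagonal_mul {ι R : Type*} [Fintype ι] [DecidableEq ι]
    [NonUnitalNonAssocSemiring R] (d : ι → R) (B : Matrix ι ι R) :
    (diagonal d * B).trace = ∑ j, d j * B j j := by
  simp only [trace, diag_apply, diagonal_mul]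

lemma Matrix.PosSemidef.abs_trace_diagonal_mul_le {ι : Type*} [Fintype ι] [DecidableEq ι]
    {B : Matrix ι ι ℝ} (hB : B.PosSemidef) {d e : ι → ℝ} {c : ℝ}
    (h : ∀ j, |d j| ≤ c * e j) :
    |(diagonal d * B).trace| ≤ c * (diagonal e * B).trace := by
  rw [trace_diagonal_mul, trace_diagonal_mul, Finset.mul_sum]
  calc |∑ j, d j * B j j| ≤ ∑ j, |d j| * B j j :=
        (Finset.abs_sum_le_sum_abs _ _).trans_eq <| by
          simp_rw [abs_mul, abs_of_nonneg hB.diag_nonneg]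
    _ ≤ ∑ j, c * (e j * B j j) := Finset.sum_le_sum fun j _ => by
        rw [← mul_assoc]
        exact mul_le_mul_of_nonneg_right (h j) hB.diag_nonneg

lemma abs_pow_three_mul_sin_le {s x c : ℝ} (hs : 0 ≤ s) (hx₀ : 0 ≤ x) (hx : x < π / 2)
    (hc : s * tan x ≤ c) :
    |s ^ 3 * sin x| ≤ c * (s ^ 2 * cos x) := by
  have hcos : 0 < cos x := cos_pos_of_mem_Ioo ⟨by linarith [pi_pos], hx⟩
  have hsin : 0 ≤ sin x := sin_nonneg_of_nonneg_of_le_pi hx₀ (by linarith [pi_pos])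
  have hsplit : s ^ 3 * sin x = s * tan x * (s ^ 2 * cos x) := by
    rw [tan_eq_sin_div_cos]
    field_simp
  rw [abs_of_nonneg (by positivity), hsplit]
  exact mul_le_mul_of_nonneg_right hc (by positivity)

theorem stmt_17 (k : ℕ) (s : Fin k → ℝ) (hs : ∀ j, s j ∈ Set.Ico (0:ℝ) (π / 4))
    (t : ℝ) (ht : t ∈ Set.Icc (0:ℝ) 1)
    (B : Matrix (Fin k) (Fin k) ℝ) (hB : B.PosSemidef) :
    |((Matrix.diagonal fun j => s j ^ 3 * Real.sin (2 * t * s j)) * B).trace| ≤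
      (⨆ j, s j * Real.tan (2 * t * s j)) *
        ((Matrix.diagonal fun j => s j ^ 2 * Real.cos (2 * t * s j)) * B).trace := by
  refine hB.abs_trace_diagonal_mul_le fun j => ?_
  obtain ⟨hs₀, hs₁⟩ := hs j
  obtain ⟨ht₀, ht₁⟩ := ht
  exact abs_pow_three_mul_sin_le hs₀ (by positivity) (by nlinarith)
    (le_ciSup (f := fun j => s j * tan (2 * t * s j)) (Set.finite_range _).bddAbove j)
end

section
/- Let (V, ⟨·,·⟩) be a finite-dimensional real inner product space, let H, H_n be self-adjoint linear maps on V with H positive definite, and set H̃_n := H^{-1/2} ∘ H_n ∘ H^{-1/2}. Suppose ξ ∈ V satisfies ⟨g, ξ⟩ + (2/5)·⟨H_n ξ, ξ⟩ ≤ 0 for some g ∈ V, and that λ_min(H̃_n) > 0. Then ⟨Hξ, ξ⟩ ≤ (25/4)·λ_min(H̃_n)⁻²·⟨H⁻¹g, g⟩. -/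
/-!
Write `S = H^{1/2}`, `u = S ξ`, `w = S⁻¹ g` and `T = S⁻¹ Hₙ S⁻¹`. Then `⟪H ξ, ξ⟫ = ‖u‖²`,
`⟪H⁻¹ g, g⟫ = ‖w‖²`, `⟪g, ξ⟫ = ⟪w, u⟫` and `⟪Hₙ ξ, ξ⟫ = ⟪T u, u⟫ ≥ λ ‖u‖²` by the spectral
theorem for `T`, whose least eigenvalue is `λ`. The hypothesis and Cauchy–Schwarz give
`(2/5) λ ‖u‖² ≤ -⟪w, u⟫ ≤ ‖w‖ ‖u‖`, so `‖u‖ ≤ (5 / (2λ)) ‖w‖`; squaring gives the claim.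
-/

open scoped RealInnerProductSpace

namespace LinearMap.IsSymmetric

variable {V : Type*} [NormedAddCommGroup V] [InnerProductSpace ℝ V]

theorem mul_norm_sq_le_inner_map_self [FiniteDimensional ℝ V] {T : V →ₗ[ℝ] V}
    (hT : T.IsSymmetric) {lam : ℝ} (hlam : ∀ r, Module.End.HasEigenvalue T r → lam ≤ r)
    (u : V) : lam * ‖u‖ ^ 2 ≤ ⟪T u, u⟫ := by
  set b := hT.eigenvectorBasis rfl
  have hinner : ⟪T u, u⟫ = ∑ i, hT.eigenvalues rfl i * b.repr u i ^ 2 := by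
    rw [← b.repr.inner_map_map (T u) u]
    simp only [PiLp.inner_apply, RCLike.inner_apply, conj_trivial]
    refine Finset.sum_congr rfl fun i _ => ?_
    rw [hT.eigenvectorBasis_apply_self_apply rfl u i]
    simp only [RCLike.ofReal_real_eq_id, id_eq]
    ring
  have hnorm : ‖u‖ ^ 2 = ∑ i, b.repr u i ^ 2 := by
    rw [← b.repr.norm_map, EuclideanSpace.norm_sq_eq]
    simp only [Real.norm_eq_abs, sq_abs]
  rw [hinner, hnorm, Finset.mul_sum]
  gcongr with i
  exact hlam _ (hT.hasEigenvalue_eigenvalues rfl i)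

theorem of_comp_eq_id {A B : V →ₗ[ℝ] V} (hA : A.IsSymmetric) (hAB : A ∘ₗ B = LinearMap.id) :
    B.IsSymmetric := fun x y => by
  calc ⟪B x, y⟫ = ⟪B x, A (B y)⟫ := by rw [← LinearMap.comp_apply, hAB, LinearMap.id_apply]
    _ = ⟪A (B x), B y⟫ := (hA _ _).symm
    _ = ⟪x, B y⟫ := by rw [← LinearMap.comp_apply, hAB, LinearMap.id_apply]

theorem inner_comp_self_apply_self {S : V →ₗ[ℝ] V} (hHhalf_inv : S.IsSymmetric) (x : V) :
    ⟪(S ∘ₗ S) x, x⟫ = ‖S x‖ ^ 2 := by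
  rw [LinearMap.comp_apply, hHhalf_inv, real_inner_self_eq_norm_sq]

end LinearMap.IsSymmetric

theorem norm_le_of_inner_add_mul_le_zero {V : Type*} [NormedAddCommGroup V]
    [InnerProductSpace ℝ V] {w u : V} {c lam q : ℝ} (hc : 0 < c) (hlam : 0 < lam)
    (hq : lam * ‖u‖ ^ 2 ≤ q) (h : ⟪w, u⟫ + c * q ≤ 0) : ‖u‖ ≤ (c * lam)⁻¹ * ‖w‖ := by
  rw [le_inv_mul_iff₀ (mul_pos hc hlam)]
  have hcs : c * lam * ‖u‖ * ‖u‖ ≤ ‖w‖ * ‖u‖ := by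
    nlinarith [neg_le_of_abs_le (abs_real_inner_le_norm w u)]
  rcases (norm_nonneg u).eq_or_lt with hu | hu
  · rw [← hu, mul_zero]
    exact norm_nonneg w
  · exact le_of_mul_le_mul_right hcs hu

theorem stmt_18_general {V : Type*} [NormedAddCommGroup V] [InnerProductSpace ℝ V]
    [FiniteDimensional ℝ V]
    (H Hn : V →ₗ[ℝ] V) (hHn : Hn.IsSymmetric)
    (Hhalf : V →ₗ[ℝ] V) (hHhalf : Hhalf.IsSymmetric)
    (hHhalfsq : Hhalf ∘ₗ Hhalf = H)
    (Hinvhalf : V →ₗ[ℝ] V) (hinv₁ : Hhalf ∘ₗ Hinvhalf = LinearMap.id)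
    (hinv₂ : Hinvhalf ∘ₗ Hhalf = LinearMap.id)
    (Hinv : V →ₗ[ℝ] V) (hinv₃ : H ∘ₗ Hinv = LinearMap.id)
    (lam : ℝ)
    (hlam : IsLeast {r : ℝ |
      Module.End.HasEigenvalue ((Hinvhalf ∘ₗ Hn ∘ₗ Hinvhalf : V →ₗ[ℝ] V) : Module.End ℝ V) r} lam)
    (hlampos : 0 < lam)
    (g ξ : V) (hξ : ⟪g, ξ⟫ + (2 / 5) * ⟪Hn ξ, ξ⟫ ≤ 0) :
    ⟪H ξ, ξ⟫ ≤ (25 / 4) * lam⁻¹ ^ 2 * ⟪Hinv g, g⟫ := by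
  have hHhalf_inv : ∀ x, Hhalf (Hinvhalf x) = x := LinearMap.congr_fun hinv₁
  have hinv_Hhalf : ∀ x, Hinvhalf (Hhalf x) = x := LinearMap.congr_fun hinv₂
  have hT : (Hinvhalf ∘ₗ Hn ∘ₗ Hinvhalf).IsSymmetric := by
    simpa [(hHhalf.of_comp_eq_id hinv₁).adjoint_eq] using hHn.conj_adjoint Hinvhalf
  have hw : Hinvhalf g = Hhalf (Hinv g) := by
    rw [← hinv_Hhalf (Hhalf (Hinv g)), ← LinearMap.comp_apply Hhalf, hHhalfsq,
      ← LinearMap.comp_apply H, hinv₃, LinearMap.id_apply]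
  have hHξ : ⟪H ξ, ξ⟫ = ‖Hhalf ξ‖ ^ 2 := by
    rw [← hHhalfsq, hHhalf.inner_comp_self_apply_self]
  have hHinv : ⟪Hinv g, g⟫ = ‖Hinvhalf g‖ ^ 2 := by
    rw [hw, ← hHhalf.inner_comp_self_apply_self, hHhalfsq, real_inner_comm,
      ← LinearMap.comp_apply H, hinv₃, LinearMap.id_apply]
  have hgξ : ⟪Hinvhalf g, Hhalf ξ⟫ = ⟪g, ξ⟫ := by rw [← hHhalf, hHhalf_inv]
  have hHnξ : ⟪(Hinvhalf ∘ₗ Hn ∘ₗ Hinvhalf) (Hhalf ξ), Hhalf ξ⟫ = ⟪Hn ξ, ξ⟫ := by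
    simp only [LinearMap.comp_apply, hinv_Hhalf]
    rw [← hHhalf, hHhalf_inv]
  have hu := norm_le_of_inner_add_mul_le_zero (by norm_num) hlampos
    (hT.mul_norm_sq_le_inner_map_self (fun r hr => hlam.2 hr) (Hhalf ξ)) (hgξ ▸ hHnξ ▸ hξ)
  rw [hHξ, hHinv]
  calc ‖Hhalf ξ‖ ^ 2 ≤ ((2 / 5 * lam)⁻¹ * ‖Hinvhalf g‖) ^ 2 := by gcongr
    _ = 25 / 4 * lam⁻¹ ^ 2 * ‖Hinvhalf g‖ ^ 2 := by ring

theorem stmt_18 {V : Type*} [NormedAddCommGroup V] [InnerProductSpace ℝ V]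
    [FiniteDimensional ℝ V]
    (H Hn : V →ₗ[ℝ] V) (hH : H.IsSymmetric) (hHn : Hn.IsSymmetric)
    (hHpos : ∀ x : V, x ≠ 0 → 0 < ⟪H x, x⟫)
    (Hhalf : V →ₗ[ℝ] V) (hHhalf : Hhalf.IsSymmetric)
    (hHhalfpos : ∀ x : V, x ≠ 0 → 0 < ⟪Hhalf x, x⟫)
    (hHhalfsq : Hhalf ∘ₗ Hhalf = H)
    (Hinvhalf : V →ₗ[ℝ] V) (hinv₁ : Hhalf ∘ₗ Hinvhalf = LinearMap.id)
    (hinv₂ : Hinvhalf ∘ₗ Hhalf = LinearMap.id)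
    (Hinv : V →ₗ[ℝ] V) (hinv₃ : H ∘ₗ Hinv = LinearMap.id) (hinv₄ : Hinv ∘ₗ H = LinearMap.id)
    (lam : ℝ)
    (hlam : IsLeast {r : ℝ |
      Module.End.HasEigenvalue ((Hinvhalf ∘ₗ Hn ∘ₗ Hinvhalf : V →ₗ[ℝ] V) : Module.End ℝ V) r} lam)
    (hlampos : 0 < lam)
    (g ξ : V) (hξ : ⟪g, ξ⟫ + (2 / 5) * ⟪Hn ξ, ξ⟫ ≤ 0) :
    ⟪H ξ, ξ⟫ ≤ (25 / 4) * lam⁻¹ ^ 2 * ⟪Hinv g, g⟫ :=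
  stmt_18_general H Hn hHn Hhalf hHhalf hHhalfsq Hinvhalf hinv₁ hinv₂ Hinv hinv₃ lam hlam hlampos g
    ξ hξ
end
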